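/- Let i ∈ N be a buyer and F ⊆ E_i. Then the function X ↦ f_{w,d}( E_X \ (E_i \ F) ) is monotone submodular on N (as a function of X ⊆ N). -/

import Mathlib

open Finset

noncomputable section

namespace TwoSidedMarket

variable {B S : Type*} [Fintype B] [Fintype S] [DecidableEq B] [DecidableEq S]

/-- A function `f` on subsets of a ground set `G` is monotone submodular:
`f ∅ = 0`, monotone on subsets of `G`, and submodular on subsets of `G`. -/
def IsMonoSubmodular {α : Type*} [DecidableEq α] (G : Finset α) (f : Finset α → ℝ) : Prop :=
  f ∅ = 0 ∧ (∀ A B : Finset α, A ⊆ B → B ⊆ G → f A ≤ f B) ∧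
    ∀ A B : Finset α, A ⊆ G → B ⊆ G → f (A ∩ B) + f (A ∪ B) ≤ f A + f B

/-- Monotone submodular, without the requirement of vanishing at `∅`. -/
def IsMonoSubmodularWeak {α : Type*} [DecidableEq α] (G : Finset α) (f : Finset α → ℝ) : Prop :=
  (∀ A B : Finset α, A ⊆ B → B ⊆ G → f A ≤ f B) ∧
    ∀ A B : Finset α, A ⊆ G → B ⊆ G → f (A ∩ B) + f (A ∪ B) ≤ f A + f B

/-- `E_i`: the edges of `E` incident to buyer `i`. -/
def Ei (E : Finset (B × S)) (i : B) : Finset (B × S) := E.filter fun e => e.1 = i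

/-- `E_j`: the edges of `E` incident to seller `j`. -/
def Ej (E : Finset (B × S)) (j : S) : Finset (B × S) := E.filter fun e => e.2 = j

/-- `E_X`: the edges of `E` incident to some buyer in `X`. -/
def EX (E : Finset (B × S)) (X : Finset B) : Finset (B × S) := E.filter fun e => e.1 ∈ X

/-- `N_F`: the buyers incident to some edge of `F`. -/
def NF (F : Finset (B × S)) : Finset B := F.image Prod.fst

/-- `x(F) = Σ_{e ∈ F} x e`. -/
def vsum (x : B × S → ℝ) (F : Finset (B × S)) : ℝ := ∑ e ∈ F, x e

/-- Membership `w ∈ P = ⊕_j P_j`: `w` is nonnegative, supported on `E`, and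
`w|_{E_j} ∈ P_j` for every seller `j`. -/
def memP (E : Finset (B × S)) (fj : S → Finset (B × S) → ℝ) (w : B × S → ℝ) : Prop :=
  (∀ e, 0 ≤ w e) ∧ (∀ e ∉ E, w e = 0) ∧ ∀ j : S, ∀ F ⊆ Ej E j, vsum w F ≤ fj j F

/-- `f(F) := Σ_{j ∈ M} f_j (E_j ∩ F)`. -/
def fTot (E : Finset (B × S)) (fj : S → Finset (B × S) → ℝ) (F : Finset (B × S)) : ℝ :=
  ∑ j : S, fj j (Ej E j ∩ F)

/-- `f_w(F) := min_{F ⊆ F' ⊆ E} (f(F') - w(F'))`. -/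
def fw (E : Finset (B × S)) (fj : S → Finset (B × S) → ℝ)
    (w : B × S → ℝ) (F : Finset (B × S)) : ℝ :=
  sInf {r : ℝ | ∃ F' : Finset (B × S), F ⊆ F' ∧ F' ⊆ E ∧ r = fTot E fj F' - vsum w F'}

/-- Membership in the remnant supply polytope `P_{w,d}`. -/
def memPwd (E : Finset (B × S)) (fj : S → Finset (B × S) → ℝ)
    (w : B × S → ℝ) (d : B → ℝ) (x : B × S → ℝ) : Prop :=
  (∀ e, 0 ≤ x e) ∧ (∀ e ∉ E, x e = 0) ∧ memP E fj (w + x) ∧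
    ∀ i : B, vsum x (Ei E i) ≤ d i

/-- `f_{w,d}(F) := max_{x ∈ P_{w,d}} x(F)`. -/
def fwd (E : Finset (B × S)) (fj : S → Finset (B × S) → ℝ)
    (w : B × S → ℝ) (d : B → ℝ) (F : Finset (B × S)) : ℝ :=
  sSup {r : ℝ | ∃ x : B × S → ℝ, memPwd E fj w d x ∧ r = vsum x F}

/-- `P^i_{w,d}(ξ)`: the remnant supply polytope of the buyers other than `i`,
given that buyer `i` receives `ξ`.  (Vectors indexed by `N - i` are encoded as
functions on all of `B` vanishing at `i`.) -/
def PiWd (E : Finset (B × S)) (fj : S → Finset (B × S) → ℝ)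
    (w : B × S → ℝ) (d : B → ℝ) (i : B) (ξ : B × S → ℝ) : Set (B → ℝ) :=
  {u | u i = 0 ∧ (∀ k, 0 ≤ u k) ∧
    ∃ x : B × S → ℝ, memPwd E fj w d x ∧ (∀ e ∈ Ei E i, x e = ξ e) ∧
      ∀ k : B, k ≠ i → vsum x (Ei E k) = u k}

/-- The clinching polytope `P^i_{w,d}` of buyer `i`:
all `ξ ∈ ℝ_{≥0}^{E_i}` with `P^i_{w,d}(ξ) = P^i_{w,d}(0)`. -/
def ClinchP (E : Finset (B × S)) (fj : S → Finset (B × S) → ℝ)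
    (w : B × S → ℝ) (d : B → ℝ) (i : B) : Set (B × S → ℝ) :=
  {ξ | (∀ e, 0 ≤ ξ e) ∧ (∀ e ∉ Ei E i, ξ e = 0) ∧
    PiWd E fj w d i ξ = PiWd E fj w d i 0}


/-!
`P_{w,d}` is the polymatroid of the contraction `f_w`, cut down by the demand `d k` on the
edges of each buyer `k`. For `T = E_X \ D` this gives a max-flow min-cut formula
`f_{w,d}(T) = min_{Z ⊆ X} (f_w (E_Z \ D) + d (X \ Z))`, and a minimum over `Z ⊆ X` of a
submodular function of `Z` plus a nonnegative modular function of `X \ Z` is monotone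
submodular in `X`.

Only `≥` in the min-cut formula needs work. Take `x` maximising `x(T)` and call a buyer
reachable when it can be reached from an unsaturated buyer by steps `k → k'` in which some
positive entry of `k'` lies in the smallest tight set through an edge of `k`. Every edge of a
reachable buyer lies in a tight set, for otherwise shifting mass along the path would raise
`x(T)`. The union of the smallest tight sets through these edges is tight and carries no mass
outside the reachable buyers' edges, so those edges form a tight set; every other buyer is
saturated. This is the cut for `Z` = the reachable buyers.
-/

lemma IsMonoSubmodular.nonneg {α : Type*} [DecidableEq α] {G A : Finset α} {f : Finset α → ℝ}
    (hf : IsMonoSubmodular G f) (hA : A ⊆ G) : 0 ≤ f A :=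
  hf.1 ▸ hf.2.1 ∅ A (empty_subset A) hA

section CappedPolymatroid

open Filter Topology

lemma eventually_add_mul_le {a b c : ℝ} (hac : a ≤ c) (hb : a = c → b ≤ 0) :
    ∀ᶠ t in 𝓝[>] (0 : ℝ), a + t * b ≤ c := by
  rcases hac.lt_or_eq with hlt | heq
  · have hlim : Tendsto (fun t => a + t * b) (𝓝 0) (𝓝 a) := by
      simpa using ((continuous_id.mul continuous_const).const_add a).tendsto (0 : ℝ)
    exact nhdsWithin_le_nhds ((hlim.eventually (eventually_lt_nhds hlt)).mono fun _ => le_of_lt)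
  · filter_upwards [self_mem_nhdsWithin] with t (ht : 0 < t)
    nlinarith [hb heq]

lemma sum_add_smul_apply {α : Type*} (x δ : α → ℝ) (t : ℝ) (A : Finset α) :
    ∑ e ∈ A, (x + t • δ) e = ∑ e ∈ A, x e + t * ∑ e ∈ A, δ e := by
  simp [sum_add_distrib, mul_sum]

variable {α β : Type*} [DecidableEq β]
  (g : Finset α → ℝ) (p : α → β) (d : β → ℝ) (T : Finset α)

/-- With `g = f_w` and `p` the buyer of an edge, this is the part of `P_{w,d}` supported
on `T`. -/
def cappedPolymatroid : Set (α → ℝ) :=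
  {x | (∀ e, 0 ≤ x e) ∧ (∀ e ∉ T, x e = 0) ∧ (∀ A ⊆ T, ∑ e ∈ A, x e ≤ g A) ∧
    ∀ k, ∑ e ∈ T with p e = k, x e ≤ d k}

def IsTight (x : α → ℝ) (A : Finset α) : Prop := ∑ e ∈ A, x e = g A

lemma sum_eq_sum_filter_add_sum_fibres {X : Finset β} (hTX : ∀ e ∈ T, p e ∈ X)
    (Z : Finset β) (x : α → ℝ) :
    ∑ e ∈ T, x e = ∑ e ∈ T with p e ∈ Z, x e + ∑ k ∈ X \ Z, ∑ e ∈ T with p e = k, x e := by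
  have hfibres : ∀ e ∈ T.filter (p · ∉ Z), p e ∈ X \ Z := fun e he =>
    mem_sdiff.2 ⟨hTX e (mem_filter.1 he).1, (mem_filter.1 he).2⟩
  rw [← sum_filter_add_sum_filter_not T (p · ∈ Z), ← sum_fiberwise_of_maps_to hfibres]
  congr 1
  refine sum_congr rfl fun k hk => ?_
  rw [filter_filter]
  refine sum_congr (filter_congr fun e _ => ?_) fun _ _ => rfl
  constructor
  · exact fun h => h.2
  · rintro rfl
    exact ⟨(mem_sdiff.1 hk).2, rfl⟩

lemma sum_le_cut {x : α → ℝ} {X : Finset β} (hxg : ∀ A ⊆ T, ∑ e ∈ A, x e ≤ g A)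
    (hxd : ∀ k, ∑ e ∈ T with p e = k, x e ≤ d k) (hTX : ∀ e ∈ T, p e ∈ X) (Z : Finset β) :
    ∑ e ∈ T, x e ≤ g {e ∈ T | p e ∈ Z} + ∑ k ∈ X \ Z, d k := by
  rw [sum_eq_sum_filter_add_sum_fibres p T hTX Z]
  exact add_le_add (hxg _ (filter_subset _ _)) (sum_le_sum fun k _ => hxd k)

lemma isClosed_cappedPolymatroid : IsClosed (cappedPolymatroid g p d T) := by
  have hsum : ∀ A : Finset α, Continuous fun x : α → ℝ => ∑ e ∈ A, x e :=
    fun A => continuous_finsetSum A fun e _ => continuous_apply e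
  simp only [cappedPolymatroid, Set.ofPred_and, Set.ofPred_forall]
  refine .inter ?_ (.inter ?_ (.inter ?_ ?_))
  · exact isClosed_iInter fun e => isClosed_le continuous_const (continuous_apply e)
  · exact isClosed_iInter fun e => isClosed_iInter fun _ =>
      isClosed_eq (continuous_apply e) continuous_const
  · exact isClosed_iInter fun A => isClosed_iInter fun _ => isClosed_le (hsum A) continuous_const
  · exact isClosed_iInter fun k => isClosed_le (hsum _) continuous_const

lemma isCompact_cappedPolymatroid : IsCompact (cappedPolymatroid g p d T) := by
  refine (isCompact_Icc (a := 0) (b := fun e => |g {e}|)).of_isClosed_subset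
    (isClosed_cappedPolymatroid g p d T) fun x hx => ⟨hx.1, fun e => ?_⟩
  by_cases he : e ∈ T
  · have hsingle := hx.2.2.1 {e} (singleton_subset_iff.2 he)
    rw [sum_singleton] at hsingle
    exact hsingle.trans (le_abs_self _)
  · simp [hx.2.1 e he]

variable {g p d T} {G : Finset α} {x : α → ℝ}

lemma exists_add_smul_mem [Finite α] [Finite β] (hx : x ∈ cappedPolymatroid g p d T)
    {δ : α → ℝ} (hδT : ∀ e ∉ T, δ e = 0) (hδ0 : ∀ e, x e = 0 → 0 ≤ δ e)
    (hδg : ∀ A ⊆ T, IsTight g x A → ∑ e ∈ A, δ e ≤ 0)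
    (hδd : ∀ k, ∑ e ∈ T with p e = k, x e = d k → ∑ e ∈ T with p e = k, δ e ≤ 0) :
    ∃ t > (0 : ℝ), x + t • δ ∈ cappedPolymatroid g p d T := by
  obtain ⟨hx0, hxT, hxg, hxd⟩ := hx
  have hnonneg : ∀ᶠ t in 𝓝[>] (0 : ℝ), ∀ e, -x e + t * -δ e ≤ 0 :=
    eventually_all.2 fun e => eventually_add_mul_le (by linarith [hx0 e])
      fun h => by linarith [hδ0 e (by linarith)]
  have hpoly : ∀ᶠ t in 𝓝[>] (0 : ℝ), ∀ A ∈ T.powerset, ∑ e ∈ A, x e + t * ∑ e ∈ A, δ e ≤ g A :=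
    (eventually_all_finset _).2 fun A hA =>
      eventually_add_mul_le (hxg A (mem_powerset.1 hA)) (hδg A (mem_powerset.1 hA))
  have hcap : ∀ᶠ t in 𝓝[>] (0 : ℝ), ∀ k,
      ∑ e ∈ T with p e = k, x e + t * ∑ e ∈ T with p e = k, δ e ≤ d k :=
    eventually_all.2 fun k => eventually_add_mul_le (hxd k) (hδd k)
  obtain ⟨t, ⟨⟨h0, hg'⟩, hd'⟩, ht⟩ :=
    (((hnonneg.and hpoly).and hcap).and self_mem_nhdsWithin).exists
  refine ⟨t, ht, fun e => ?_, fun e he => by simp [hxT e he, hδT e he], fun A hA => ?_,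
    fun k => ?_⟩
  · simp only [Pi.add_apply, Pi.smul_apply, smul_eq_mul]
    linarith [h0 e]
  · rw [sum_add_smul_apply]
    exact hg' A (mem_powerset.2 hA)
  · rw [sum_add_smul_apply]
    exact hd' k

variable [DecidableEq α]

lemma zero_mem_cappedPolymatroid (hg : IsMonoSubmodular G g) (hTG : T ⊆ G)
    (hd : ∀ k, 0 ≤ d k) : (0 : α → ℝ) ∈ cappedPolymatroid g p d T :=
  ⟨fun _ => le_rfl, fun _ _ => rfl, fun A hA => by simpa using hg.nonneg (hA.trans hTG),
    fun k => by simpa using hd k⟩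

lemma IsTight.inter_union (hg : IsMonoSubmodular G g) (hTG : T ⊆ G)
    (hx : x ∈ cappedPolymatroid g p d T) {A B : Finset α} (hA : A ⊆ T) (hB : B ⊆ T)
    (htA : IsTight g x A) (htB : IsTight g x B) :
    IsTight g x (A ∩ B) ∧ IsTight g x (A ∪ B) := by
  have hsub := hg.2.2 A B (hA.trans hTG) (hB.trans hTG)
  have hinter := hx.2.2.1 (A ∩ B) (inter_subset_left.trans hA)
  have hunion := hx.2.2.1 (A ∪ B) (union_subset hA hB)
  have hsum : ∑ e ∈ A ∪ B, x e + ∑ e ∈ A ∩ B, x e = ∑ e ∈ A, x e + ∑ e ∈ B, x e :=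
    sum_union_inter
  unfold IsTight at *
  constructor <;> linarith

lemma IsTight.sup (hg : IsMonoSubmodular G g) (hTG : T ⊆ G)
    (hx : x ∈ cappedPolymatroid g p d T) {ι : Type*} {s : Finset ι} {A : ι → Finset α}
    (hA : ∀ i ∈ s, A i ⊆ T ∧ IsTight g x (A i)) : s.sup A ⊆ T ∧ IsTight g x (s.sup A) := by
  refine sup_induction (p := fun B => B ⊆ T ∧ IsTight g x B) ⟨empty_subset T, ?_⟩ ?_ hA
  · simp [IsTight, hg.1]
  · rintro B ⟨hB, htB⟩ C ⟨hC, htC⟩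
    exact ⟨union_subset hB hC, (htB.inter_union hg hTG hx hB hC htC).2⟩

variable (g T) in
open Classical in
def tightHull (x : α → ℝ) (e : α) : Finset α :=
  {f ∈ T | ∀ A ⊆ T, IsTight g x A → e ∈ A → f ∈ A}

lemma mem_tightHull {e f : α} :
    f ∈ tightHull g T x e ↔ f ∈ T ∧ ∀ A ⊆ T, IsTight g x A → e ∈ A → f ∈ A := by
  simp [tightHull]

lemma isTight_tightHull (hg : IsMonoSubmodular G g) (hTG : T ⊆ G)
    (hx : x ∈ cappedPolymatroid g p d T) {e : α} (hcov : ∃ A ⊆ T, IsTight g x A ∧ e ∈ A) :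
    IsTight g x (tightHull g T x e) ∧ e ∈ tightHull g T x e := by
  classical
  obtain ⟨A₀, hA₀, htA₀, heA₀⟩ := hcov
  set S := {A ∈ T.powerset | IsTight g x A ∧ e ∈ A}
  have hS : S.Nonempty := ⟨A₀, mem_filter.2 ⟨mem_powerset.2 hA₀, htA₀, heA₀⟩⟩
  have hhull : tightHull g T x e = S.inf' hS id := by
    ext f
    simp only [tightHull, mem_filter, mem_inf', S, mem_powerset, id, and_imp]
    exact ⟨fun h => h.2, fun h => ⟨hA₀ (h A₀ hA₀ htA₀ heA₀), h⟩⟩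
  rw [hhull]
  refine (inf'_induction hS id (p := fun A => A ⊆ T ∧ IsTight g x A ∧ e ∈ A) ?_ ?_).2
  · rintro A ⟨hA, htA, heA⟩ B ⟨hB, htB, heB⟩
    exact ⟨inter_subset_left.trans hA, (htA.inter_union hg hTG hx hA hB htB).1,
      mem_inter.2 ⟨heA, heB⟩⟩
  · intro A hA
    simpa [S] using hA

variable (g p d T) in
/-- The direction `χ e₀ + Σⱼ (χ eⱼ₊₁ - χ fⱼ)` of an exchange path `e₀, f₀, e₁, …, eₘ = e`
with `fⱼ ∈ tightHull eⱼ`: if no tight set contains `e`, a small multiple of it can be added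
to `x`. -/
structure IsAugmentingDirection (x δ : α → ℝ) (e : α) : Prop where
  support : ∀ f ∉ T, δ f = 0
  pos_of_neg : ∀ f, δ f < 0 → 0 < x f
  sum_tight_le : ∀ A ⊆ T, IsTight g x A → ∑ f ∈ A, δ f ≤ if e ∈ A then 1 else 0
  sum_saturated_le : ∀ k, ∑ f ∈ T with p f = k, x f = d k → ∑ f ∈ T with p f = k, δ f ≤ 0
  sum_eq : ∑ f ∈ T, δ f = 1

lemma isAugmentingDirection_single {e : α} (he : e ∈ T)
    (hunsat : ∑ f ∈ T with p f = p e, x f < d (p e)) :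
    IsAugmentingDirection g p d T x (Pi.single e 1) e where
  support f hf := Pi.single_eq_of_ne (fun h : f = e => hf (h ▸ he)) 1
  pos_of_neg f hf := absurd hf (not_lt.2 (by by_cases h : f = e <;> simp [h]))
  sum_tight_le A _ _ := (sum_pi_single' e 1 A).le
  sum_saturated_le k hk := by
    rw [sum_pi_single']
    split_ifs with h
    · rw [(mem_filter.1 h).2] at hunsat
      exact absurd hk hunsat.ne
    · rfl
  sum_eq := by simp [sum_pi_single', he]

lemma sum_add_single_sub_single (δ : α → ℝ) (e f : α) (A : Finset α) :
    ∑ a ∈ A, (δ + Pi.single e 1 - Pi.single f 1 : α → ℝ) a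
      = ∑ a ∈ A, δ a + (if e ∈ A then 1 else 0) - (if f ∈ A then 1 else 0) := by
  simp [sum_add_distrib, sum_sub_distrib, sum_pi_single']

lemma IsAugmentingDirection.exchange {δ : α → ℝ} {e e' f : α}
    (hδ : IsAugmentingDirection g p d T x δ e) (hf : f ∈ tightHull g T x e) (hxf : 0 < x f)
    (he' : e' ∈ T) (hpf : p f = p e') :
    IsAugmentingDirection g p d T x (δ + Pi.single e' 1 - Pi.single f 1) e' := by
  obtain ⟨hfT, hf⟩ := mem_tightHull.1 hf
  refine ⟨fun a ha => ?_, fun a ha => ?_, fun A hA htA => ?_, fun k hk => ?_, ?_⟩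
  · have hae' : a ≠ e' := fun h => ha (h ▸ he')
    have haf : a ≠ f := fun h => ha (h ▸ hfT)
    simp [hδ.support a ha, hae', haf]
  · by_cases haf : a = f
    · exact haf ▸ hxf
    · refine hδ.pos_of_neg a ?_
      have : (0 : ℝ) ≤ (Pi.single e' 1 : α → ℝ) a := by by_cases h : a = e' <;> simp [h]
      simp only [Pi.sub_apply, Pi.add_apply, Pi.single_eq_of_ne haf] at ha
      linarith
  · have hef : (if e ∈ A then (1 : ℝ) else 0) ≤ if f ∈ A then 1 else 0 := by
      split_ifs with heA hfA <;> simp_all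
    rw [sum_add_single_sub_single]
    linarith [hδ.sum_tight_le A hA htA]
  · rw [sum_add_single_sub_single]
    simp only [mem_filter, he', hfT, true_and, hpf, add_sub_cancel_right]
    exact hδ.sum_saturated_le k hk
  · rw [sum_add_single_sub_single, if_pos he', if_pos hfT, hδ.sum_eq]
    norm_num

variable (g p T) in
/-- Mass can be moved from a positive entry `f` of buyer `k'` to an edge `e` of buyer `k`
without leaving a tight set, because every tight set through `e` contains `f`. -/
def ExchangeStep (x : α → ℝ) (k k' : β) : Prop :=
  ∃ e ∈ T, p e = k ∧ ∃ f ∈ tightHull g T x e, p f = k' ∧ 0 < x f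

variable (g p d T) in
def Reachable (x : α → ℝ) (k : β) : Prop :=
  ∃ k₀, ∑ e ∈ T with p e = k₀, x e < d k₀ ∧ Relation.ReflTransGen (ExchangeStep g p T x) k₀ k

lemma Reachable.exists_isAugmentingDirection {k : β} (hk : Reachable g p d T x k) {e : α}
    (he : e ∈ T) (hek : p e = k) : ∃ δ, IsAugmentingDirection g p d T x δ e := by
  obtain ⟨k₀, hk₀, hpath⟩ := hk
  induction hpath generalizing e with
  | refl => exact ⟨_, isAugmentingDirection_single he (hek ▸ hk₀)⟩
  | tail _ hstep ih =>
    obtain ⟨e₁, he₁, rfl, f, hf, hfk, hxf⟩ := hstep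
    obtain ⟨δ, hδ⟩ := ih he₁ rfl
    exact ⟨_, hδ.exchange hf hxf he (hfk.trans hek.symm)⟩

lemma exists_isTight_mem_of_reachable [Finite α] [Finite β]
    (hx : x ∈ cappedPolymatroid g p d T)
    (hmax : ∀ y ∈ cappedPolymatroid g p d T, ∑ e ∈ T, y e ≤ ∑ e ∈ T, x e) {e : α} (he : e ∈ T)
    (hreach : Reachable g p d T x (p e)) : ∃ A ⊆ T, IsTight g x A ∧ e ∈ A := by
  by_contra! hcov
  obtain ⟨δ, hδ⟩ := hreach.exists_isAugmentingDirection he rfl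
  obtain ⟨t, ht, hmem⟩ := exists_add_smul_mem hx hδ.support
    (fun f hf => not_lt.1 fun h => (hδ.pos_of_neg f h).ne' hf)
    (fun A hA htA => by simpa [hcov A hA htA] using hδ.sum_tight_le A hA htA)
    hδ.sum_saturated_le
  have hle := hmax _ hmem
  rw [sum_add_smul_apply, hδ.sum_eq] at hle
  linarith

open Classical in
lemma isTight_filter_reachable [Finite α] [Finite β] (hg : IsMonoSubmodular G g) (hTG : T ⊆ G)
    (hx : x ∈ cappedPolymatroid g p d T)
    (hmax : ∀ y ∈ cappedPolymatroid g p d T, ∑ e ∈ T, y e ≤ ∑ e ∈ T, x e) :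
    IsTight g x {e ∈ T | Reachable g p d T x (p e)} := by
  set R := {e ∈ T | Reachable g p d T x (p e)}
  have hhull : ∀ e ∈ R, IsTight g x (tightHull g T x e) ∧ e ∈ tightHull g T x e :=
    fun e he => isTight_tightHull hg hTG hx
      (exists_isTight_mem_of_reachable hx hmax (mem_filter.1 he).1 (mem_filter.1 he).2)
  obtain ⟨hAT, hAt⟩ := IsTight.sup hg hTG hx (s := R) (A := tightHull g T x)
    fun e he => ⟨filter_subset _ _, (hhull e he).1⟩
  have hRA : R ⊆ R.sup (tightHull g T x) := fun e he =>
    le_sup (f := tightHull g T x) he (hhull e he).2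
  have hzero : ∀ f ∈ R.sup (tightHull g T x), f ∉ R → x f = 0 := by
    intro f hf hfR
    obtain ⟨e, heR, hfe⟩ := mem_sup.1 hf
    obtain ⟨heT, k₀, hk₀, hpath⟩ := mem_filter.1 heR
    by_contra hxf
    have hstep : ExchangeStep g p T x (p e) (p f) :=
      ⟨e, heT, rfl, f, hfe, rfl, lt_of_le_of_ne (hx.1 f) (Ne.symm hxf)⟩
    exact hfR (mem_filter.2 ⟨(mem_tightHull.1 hfe).1, k₀, hk₀, hpath.tail hstep⟩)
  have hsum : ∑ e ∈ R, x e = ∑ e ∈ R.sup (tightHull g T x), x e := sum_subset hRA hzero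
  have hle : ∑ e ∈ R, x e ≤ g R := hx.2.2.1 R (filter_subset _ _)
  have hmono : g R ≤ g (R.sup (tightHull g T x)) := hg.2.1 _ _ hRA (hAT.trans hTG)
  unfold IsTight at hAt ⊢
  linarith

theorem exists_mem_cappedPolymatroid_sum_eq_cut [Finite α] [Finite β]
    (hg : IsMonoSubmodular G g) (hTG : T ⊆ G) (hd : ∀ k, 0 ≤ d k) {X : Finset β}
    (hTX : ∀ e ∈ T, p e ∈ X) :
    ∃ x ∈ cappedPolymatroid g p d T, ∃ Z ⊆ X,
      ∑ e ∈ T, x e = g {e ∈ T | p e ∈ Z} + ∑ k ∈ X \ Z, d k := by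
  classical
  obtain ⟨x, hx, hmax⟩ := (isCompact_cappedPolymatroid g p d T).exists_isMaxOn
    ⟨0, zero_mem_cappedPolymatroid hg hTG hd⟩
    (continuous_finsetSum T fun e _ => continuous_apply e).continuousOn
  set Z := {k ∈ X | Reachable g p d T x k}
  have hR : {e ∈ T | p e ∈ Z} = {e ∈ T | Reachable g p d T x (p e)} :=
    filter_congr fun e he => by simp [Z, hTX e he]
  have hsat : ∀ k ∈ X \ Z, ∑ e ∈ T with p e = k, x e = d k := fun k hk =>
    (hx.2.2.2 k).antisymm <| not_lt.1 fun hlt =>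
      (mem_sdiff.1 hk).2 (mem_filter.2 ⟨(mem_sdiff.1 hk).1, k, hlt, .refl⟩)
  refine ⟨x, hx, Z, filter_subset _ _, ?_⟩
  rw [sum_eq_sum_filter_add_sum_fibres p T hTX Z x, hR, sum_congr rfl hsat,
    isTight_filter_reachable hg hTG hx hmax]

end CappedPolymatroid

section Convolution

variable {β : Type*} [DecidableEq β] {d : β → ℝ}

lemma sum_add_sum_le_of_union_inter_subset (hd : ∀ k, 0 ≤ d k) {U V P Q : Finset β}
    (hunion : U ∪ V ⊆ P ∪ Q) (hinter : U ∩ V ⊆ P ∩ Q) :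
    ∑ k ∈ U, d k + ∑ k ∈ V, d k ≤ ∑ k ∈ P, d k + ∑ k ∈ Q, d k := by
  rw [← sum_union_inter, ← sum_union_inter (s₁ := P)]
  exact add_le_add (sum_le_sum_of_subset_of_nonneg hunion fun k _ _ => hd k)
    (sum_le_sum_of_subset_of_nonneg hinter fun k _ _ => hd k)

lemma IsMonoSubmodularWeak.of_isLeast_convolution {G : Finset β} {h φ : Finset β → ℝ}
    (hh : IsMonoSubmodularWeak G h) (hd : ∀ k, 0 ≤ d k)
    (hφ : ∀ X ⊆ G, IsLeast {r | ∃ Z ⊆ X, r = h Z + ∑ k ∈ X \ Z, d k} (φ X)) :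
    IsMonoSubmodularWeak G φ := by
  refine ⟨fun X Y hXY hYG => ?_, fun X Y hXG hYG => ?_⟩
  · obtain ⟨Z, hZY, hφY⟩ := (hφ Y hYG).1
    have hle := (hφ X (hXY.trans hYG)).2 ⟨Z ∩ X, inter_subset_right, rfl⟩
    have hh' := hh.1 (Z ∩ X) Z inter_subset_left (hZY.trans hYG)
    have hd' : ∑ k ∈ X \ (Z ∩ X), d k ≤ ∑ k ∈ Y \ Z, d k :=
      sum_le_sum_of_subset_of_nonneg (fun k hk => by simp at hk ⊢; tauto) fun k _ _ => hd k
    linarith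
  · obtain ⟨ZX, hZX, hφX⟩ := (hφ X hXG).1
    obtain ⟨ZY, hZY, hφY⟩ := (hφ Y hYG).1
    have hinter := (hφ _ (inter_subset_left.trans hXG)).2
      ⟨ZX ∩ ZY, inter_subset_inter hZX hZY, rfl⟩
    have hunion := (hφ _ (union_subset hXG hYG)).2 ⟨ZX ∪ ZY, union_subset_union hZX hZY, rfl⟩
    have hh' := hh.2 ZX ZY (hZX.trans hXG) (hZY.trans hYG)
    have hd' := sum_add_sum_le_of_union_inter_subset hd
      (U := (X ∩ Y) \ (ZX ∩ ZY)) (V := (X ∪ Y) \ (ZX ∪ ZY)) (P := X \ ZX) (Q := Y \ ZY)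
      (fun k hk => by simp at hk ⊢; tauto) (fun k hk => by simp at hk ⊢; tauto)
    linarith

end Convolution

section Market

variable {E : Finset (B × S)} {fj : S → Finset (B × S) → ℝ} {w : B × S → ℝ}

omit [Fintype B] in
lemma vsum_eq_sum_vsum_Ej_inter (x : B × S → ℝ) {G : Finset (B × S)} (hG : G ⊆ E) :
    vsum x G = ∑ j : S, vsum x (Ej E j ∩ G) := by
  have hfibre : ∀ j, Ej E j ∩ G = {e ∈ G | e.2 = j} := fun j => by
    ext e
    simp only [Ej, mem_inter, mem_filter]
    exact ⟨fun h => ⟨h.2, h.1.2⟩, fun h => ⟨⟨hG h.1, h.2⟩, h.1⟩⟩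
  simp only [hfibre, vsum]
  exact (sum_fiberwise G Prod.snd x).symm

omit [Fintype B] in
lemma vsum_le_fTot {x : B × S → ℝ} (hx : memP E fj x) {G : Finset (B × S)} (hG : G ⊆ E) :
    vsum x G ≤ fTot E fj G := by
  rw [vsum_eq_sum_vsum_Ej_inter x hG, fTot]
  exact sum_le_sum fun j _ => hx.2.2 j _ inter_subset_left

omit [Fintype B] in
lemma fTot_inter_add_fTot_union_le (hfj : ∀ j : S, IsMonoSubmodular (Ej E j) (fj j))
    (G H : Finset (B × S)) :
    fTot E fj (G ∩ H) + fTot E fj (G ∪ H) ≤ fTot E fj G + fTot E fj H := by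
  simp only [fTot, ← sum_add_distrib]
  refine sum_le_sum fun j _ => ?_
  rw [inter_inter_distrib_left, inter_union_distrib_left]
  exact (hfj j).2.2 _ _ inter_subset_left inter_subset_left

omit [Fintype B] in
lemma fTot_eq_of_subset_Ej (hfj : ∀ j : S, fj j ∅ = 0) {j : S} {G : Finset (B × S)}
    (hG : G ⊆ Ej E j) : fTot E fj G = fj j G := by
  rw [fTot, sum_eq_single j, inter_eq_right.2 hG]
  · intro j' _ hj'
    have hempty : Ej E j' ∩ G = ∅ := by
      refine disjoint_iff_inter_eq_empty.1 (disjoint_left.2 fun e he heG => hj' ?_)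
      exact (mem_filter.1 he).2.symm.trans (mem_filter.1 (hG heG)).2
    rw [hempty, hfj j']
  · exact fun h => absurd (mem_univ j) h

lemma finite_fw_candidates (F : Finset (B × S)) :
    {r | ∃ F', F ⊆ F' ∧ F' ⊆ E ∧ r = fTot E fj F' - vsum w F'}.Finite :=
  (Set.finite_range fun F' => fTot E fj F' - vsum w F').subset
    (by rintro _ ⟨F', -, -, rfl⟩; exact ⟨F', rfl⟩)

lemma fw_le {F F' : Finset (B × S)} (hFF' : F ⊆ F') (hF'E : F' ⊆ E) :
    fw E fj w F ≤ fTot E fj F' - vsum w F' :=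
  csInf_le (finite_fw_candidates F).bddBelow ⟨F', hFF', hF'E, rfl⟩

lemma exists_fw_eq {F : Finset (B × S)} (hF : F ⊆ E) :
    ∃ F', F ⊆ F' ∧ F' ⊆ E ∧ fw E fj w F = fTot E fj F' - vsum w F' :=
  Set.Nonempty.csInf_mem (s := {r | ∃ F', F ⊆ F' ∧ F' ⊆ E ∧ r = fTot E fj F' - vsum w F'})
    ⟨_, E, hF, subset_rfl, rfl⟩ (finite_fw_candidates F)

lemma fw_mono {A A' : Finset (B × S)} (hAA' : A ⊆ A') (hA' : A' ⊆ E) :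
    fw E fj w A ≤ fw E fj w A' := by
  obtain ⟨F', hA'F', hF'E, hF'⟩ := exists_fw_eq (fj := fj) (w := w) hA'
  exact hF' ▸ fw_le (hAA'.trans hA'F') hF'E

lemma isMonoSubmodular_fw (hfj : ∀ j : S, IsMonoSubmodular (Ej E j) (fj j))
    (hw : memP E fj w) : IsMonoSubmodular E (fw E fj w) := by
  refine ⟨le_antisymm ?_ ?_, fun A A' hAA' hA' => fw_mono hAA' hA', fun A A' hA hA' => ?_⟩
  · have hfTot : fTot E fj ∅ = 0 := by simp [fTot, (hfj _).1]
    simpa [hfTot, vsum] using fw_le (fj := fj) (w := w) subset_rfl (empty_subset E)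
  · obtain ⟨F', -, hF'E, hF'⟩ := exists_fw_eq (fj := fj) (w := w) (empty_subset E)
    linarith [vsum_le_fTot hw hF'E]
  · obtain ⟨FA, hAFA, hFAE, hFA⟩ := exists_fw_eq (fj := fj) (w := w) hA
    obtain ⟨FB, hAFB, hFBE, hFB⟩ := exists_fw_eq (fj := fj) (w := w) hA'
    have hinter := fw_le (fj := fj) (w := w) (inter_subset_inter hAFA hAFB)
      (inter_subset_left.trans hFAE)
    have hunion := fw_le (fj := fj) (w := w) (union_subset_union hAFA hAFB)
      (union_subset hFAE hFBE)
    have hsub := fTot_inter_add_fTot_union_le hfj FA FB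
    have hw' : vsum w (FA ∪ FB) + vsum w (FA ∩ FB) = vsum w FA + vsum w FB := sum_union_inter
    linarith

lemma vsum_le_fw_of_memP_add {x : B × S → ℝ} (hx0 : ∀ e, 0 ≤ x e) (hwx : memP E fj (w + x))
    {A : Finset (B × S)} (hA : A ⊆ E) : vsum x A ≤ fw E fj w A := by
  obtain ⟨F', hAF', hF'E, hF'⟩ := exists_fw_eq (fj := fj) (w := w) hA
  have hmono : vsum x A ≤ vsum x F' := sum_le_sum_of_subset_of_nonneg hAF' fun e _ _ => hx0 e
  have hsum : vsum (w + x) F' = vsum w F' + vsum x F' := sum_add_distrib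
  linarith [vsum_le_fTot hwx hF'E]

lemma memP_add_of_vsum_le_fw (hfj : ∀ j : S, fj j ∅ = 0) (hw : memP E fj w) {x : B × S → ℝ}
    (hx0 : ∀ e, 0 ≤ x e) (hxE : ∀ e ∉ E, x e = 0) (hx : ∀ A ⊆ E, vsum x A ≤ fw E fj w A) :
    memP E fj (w + x) := by
  refine ⟨fun e => add_nonneg (hw.1 e) (hx0 e), fun e he => by simp [hw.2.1 e he, hxE e he],
    fun j G hG => ?_⟩
  have hGE : G ⊆ E := hG.trans (filter_subset _ E)
  have hsum : vsum (w + x) G = vsum w G + vsum x G := sum_add_distrib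
  linarith [hx G hGE, fw_le (fj := fj) (w := w) subset_rfl hGE, fTot_eq_of_subset_Ej hfj hG]

variable {d : B → ℝ} {T : Finset (B × S)}

omit [Fintype B] [Fintype S] in
lemma Ei_inter_eq_filter (hT : T ⊆ E) (k : B) : Ei E k ∩ T = {e ∈ T | e.1 = k} := by
  ext e
  simp only [Ei, mem_inter, mem_filter]
  exact ⟨fun h => ⟨h.2, h.1.2⟩, fun h => ⟨⟨hT h.1, h.2⟩, h.1⟩⟩

lemma vsum_le_cut_of_memPwd (hT : T ⊆ E) {X : Finset B} (hTX : ∀ e ∈ T, e.1 ∈ X)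
    {x : B × S → ℝ} (hx : memPwd E fj w d x) (Z : Finset B) :
    vsum x T ≤ fw E fj w {e ∈ T | e.1 ∈ Z} + ∑ k ∈ X \ Z, d k := by
  obtain ⟨hx0, -, hxP, hxd⟩ := hx
  refine sum_le_cut _ Prod.fst d T (fun A hA => vsum_le_fw_of_memP_add hx0 hxP (hA.trans hT))
    (fun k => ?_) hTX Z
  have hsub : {e ∈ T | e.1 = k} ⊆ Ei E k := Ei_inter_eq_filter hT k ▸ inter_subset_left
  exact (sum_le_sum_of_subset_of_nonneg hsub fun e _ _ => hx0 e).trans (hxd k)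

lemma memPwd_of_mem_cappedPolymatroid (hfj : ∀ j : S, fj j ∅ = 0) (hw : memP E fj w)
    (hT : T ⊆ E) {x : B × S → ℝ} (hx : x ∈ cappedPolymatroid (fw E fj w) Prod.fst d T) :
    memPwd E fj w d x := by
  obtain ⟨hx0, hxT, hxg, hxd⟩ := hx
  have hxE : ∀ e ∉ E, x e = 0 := fun e he => hxT e fun h => he (hT h)
  have hrestrict : ∀ A : Finset (B × S), vsum x A = vsum x (A ∩ T) := fun A =>
    (sum_subset inter_subset_left fun e heA he => hxT e fun h => he (mem_inter.2 ⟨heA, h⟩)).symm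
  refine ⟨hx0, hxE, memP_add_of_vsum_le_fw hfj hw hx0 hxE fun A hA => ?_, fun k => ?_⟩
  · rw [hrestrict]
    exact (hxg _ inter_subset_right).trans (fw_mono inter_subset_left hA)
  · rw [hrestrict, Ei_inter_eq_filter hT k]
    exact hxd k

theorem isLeast_fwd (hfj : ∀ j : S, IsMonoSubmodular (Ej E j) (fj j)) (hw : memP E fj w)
    (hd : ∀ k, 0 ≤ d k) (hT : T ⊆ E) {X : Finset B} (hTX : ∀ e ∈ T, e.1 ∈ X) :
    IsLeast {r | ∃ Z ⊆ X, r = fw E fj w {e ∈ T | e.1 ∈ Z} + ∑ k ∈ X \ Z, d k}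
      (fwd E fj w d T) := by
  obtain ⟨x, hx, Z, hZX, hxZ⟩ :=
    exists_mem_cappedPolymatroid_sum_eq_cut (isMonoSubmodular_fw hfj hw) hT hd hTX
  change vsum x T = _ at hxZ
  have hxP := memPwd_of_mem_cappedPolymatroid (fun j => (hfj j).1) hw hT hx
  have hmax : IsGreatest {r | ∃ y, memPwd E fj w d y ∧ r = vsum y T} (vsum x T) :=
    ⟨⟨x, hxP, rfl⟩, by
      rintro _ ⟨y, hy, rfl⟩
      rw [hxZ]
      exact vsum_le_cut_of_memPwd hT hTX hy Z⟩
  rw [fwd, hmax.csSup_eq]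
  exact ⟨⟨Z, hZX, hxZ⟩, by
    rintro _ ⟨Z', -, rfl⟩
    exact vsum_le_cut_of_memPwd hT hTX hxP Z'⟩

end Market

section BuyerSets

variable {E : Finset (B × S)} {fj : S → Finset (B × S) → ℝ} {w : B × S → ℝ}

omit [Fintype B] [Fintype S] in
lemma EX_sdiff_subset (X : Finset B) (D : Finset (B × S)) : EX E X \ D ⊆ E :=
  sdiff_subset.trans (filter_subset _ E)

omit [Fintype B] [Fintype S] in
lemma filter_EX_sdiff {X Z : Finset B} (hZX : Z ⊆ X) (D : Finset (B × S)) :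
    {e ∈ EX E X \ D | e.1 ∈ Z} = EX E Z \ D := by
  ext e
  simp only [EX, mem_filter, mem_sdiff]
  exact ⟨fun h => ⟨⟨h.1.1.1, h.2⟩, h.1.2⟩, fun h => ⟨⟨⟨h.1.1, hZX h.1.2⟩, h.2⟩, h.1.2⟩⟩

lemma isMonoSubmodularWeak_fw_EX_sdiff (hfj : ∀ j : S, IsMonoSubmodular (Ej E j) (fj j))
    (hw : memP E fj w) (D : Finset (B × S)) {G : Finset B} :
    IsMonoSubmodularWeak G fun Z => fw E fj w (EX E Z \ D) := by
  have hfw := isMonoSubmodular_fw hfj hw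
  refine ⟨fun Z Z' hZZ' _ => hfw.2.1 _ _ ?_ (EX_sdiff_subset Z' D), fun Z Z' _ _ => ?_⟩
  · exact sdiff_subset_sdiff (monotone_filter_right _ fun _ _ h => hZZ' h) subset_rfl
  · have hinter : EX E (Z ∩ Z') \ D = (EX E Z \ D) ∩ (EX E Z' \ D) := by
      ext e; simp only [EX, mem_filter, mem_sdiff, mem_inter]; tauto
    have hunion : EX E (Z ∪ Z') \ D = (EX E Z \ D) ∪ (EX E Z' \ D) := by
      ext e; simp only [EX, mem_filter, mem_sdiff, mem_union]; tauto
    simp only [hinter, hunion]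
    exact hfw.2.2 _ _ (EX_sdiff_subset Z D) (EX_sdiff_subset Z' D)

lemma isLeast_fwd_EX_sdiff (hfj : ∀ j : S, IsMonoSubmodular (Ej E j) (fj j))
    (hw : memP E fj w) {d : B → ℝ} (hd : ∀ k, 0 ≤ d k) (X : Finset B) (D : Finset (B × S)) :
    IsLeast {r | ∃ Z ⊆ X, r = fw E fj w (EX E Z \ D) + ∑ k ∈ X \ Z, d k}
      (fwd E fj w d (EX E X \ D)) := by
  have hcuts : {r | ∃ Z ⊆ X, r = fw E fj w (EX E Z \ D) + ∑ k ∈ X \ Z, d k}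
      = {r | ∃ Z ⊆ X, r = fw E fj w {e ∈ EX E X \ D | e.1 ∈ Z} + ∑ k ∈ X \ Z, d k} := by
    ext r
    exact exists_congr fun Z => and_congr_right fun hZX => by rw [filter_EX_sdiff hZX]
  rw [hcuts]
  exact isLeast_fwd hfj hw hd (EX_sdiff_subset X D)
    fun e he => (mem_filter.1 (mem_sdiff.1 he).1).2

end BuyerSets

theorem fwd_restricted_monotone_submodular_general
    (E : Finset (B × S)) (fj : S → Finset (B × S) → ℝ)
    (hfj : ∀ j : S, IsMonoSubmodular (Ej E j) (fj j))
    (w : B × S → ℝ) (hw : memP E fj w)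
    (d : B → ℝ) (hd : ∀ i : B, 0 ≤ d i)
    (i : B) (F : Finset (B × S)) :
    IsMonoSubmodularWeak (Finset.univ : Finset B)
      (fun X => fwd E fj w d (EX E X \ (Ei E i \ F))) :=
  (isMonoSubmodularWeak_fw_EX_sdiff hfj hw (Ei E i \ F)).of_isLeast_convolution hd
    fun X _ => isLeast_fwd_EX_sdiff hfj hw hd X (Ei E i \ F)

/-- for `F ⊆ E_i`, the function `X ↦ f_{w,d}(E_X \ (E_i \ F))`
is monotone submodular on `N`. -/
theorem fwd_restricted_monotone_submodular
    (E : Finset (B × S)) (fj : S → Finset (B × S) → ℝ)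
    (hfj : ∀ j : S, IsMonoSubmodular (Ej E j) (fj j))
    (w : B × S → ℝ) (hw : memP E fj w)
    (d : B → ℝ) (hd : ∀ i : B, 0 ≤ d i)
    (i : B) (F : Finset (B × S)) (hF : F ⊆ Ei E i) :
    IsMonoSubmodularWeak (Finset.univ : Finset B)
      (fun X => fwd E fj w d (EX E X \ (Ei E i \ F))) :=
  fwd_restricted_monotone_submodular_general E fj hfj w hw d hd i F

end TwoSidedMarket
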